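/- Let E : [t₁, T) → ℝ be a positive differentiable function with E(t) ≥ E(t₁) > 0 for all t, satisfying E'(t) ≤ A·E(t)^(3/2) + B·E(t)² on (t₁, T) with A, B > 0. If limsup_{t→T} E(t) = ∞, then T − t₁ ≥ (2/A)·(1/√E(t₁)) + (B/A²)·lim_{t→T} log( E(t₁)(A + B√E(t))² / ( E(t)(A + B√E(t₁))² ) ), and in particular T − t₁ ≥ (2/A)·E(t₁)^(−1/2) + (B/A²)·log( E(t₁)B² / (A + B√E(t₁))² ). -/

import Mathlib

/-!
Separation of variables: `Φ = blowupPotential A B` is an antiderivative of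
`1 / (A x^{3/2} + B x²)`, so the inequality `E' ≤ A E^{3/2} + B E²` says that `t ↦ Φ (E t)` grows
at most at unit rate: `Φ (E t) - Φ (E t₁) ≤ t - t₁ < T - t₁`. Letting `t → T` along times where
`E t → ∞`, `Φ (E t)` tends to `(2B/A²) log B`, which gives the bound; the same limit forces the
value of the limit `L` in the first bound.
-/

open Filter Real Set Topology

theorem image_sub_le_sub_of_hasDerivAt_inv {E E' G g : ℝ → ℝ} {a b : ℝ}
    (hE : ∀ t ∈ Ico a b, HasDerivAt E (E' t) t)
    (hG : ∀ t ∈ Ico a b, HasDerivAt G (g (E t))⁻¹ (E t))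
    (hg : ∀ t ∈ Ioo a b, 0 < g (E t)) (hEg : ∀ t ∈ Ioo a b, E' t ≤ g (E t))
    {t : ℝ} (ht : t ∈ Ico a b) : G (E t) - G (E a) ≤ t - a := by
  have hGE : ∀ s ∈ Icc a t, HasDerivAt (G ∘ E) ((g (E s))⁻¹ * E' s) s := fun s hs =>
    (hG s ⟨hs.1, hs.2.trans_lt ht.2⟩).comp s (hE s ⟨hs.1, hs.2.trans_lt ht.2⟩)
  have hderiv_le : ∀ s ∈ interior (Icc a t), deriv (G ∘ E) s ≤ 1 := by
    intro s hs
    rw [interior_Icc] at hs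
    have hs' : s ∈ Ioo a b := ⟨hs.1, hs.2.trans ht.2⟩
    rw [(hGE s (Ioo_subset_Icc_self hs)).deriv]
    exact inv_mul_le_one_of_le₀ (hEg s hs') (hg s hs').le
  simpa using (convex_Icc a t).image_sub_le_mul_sub_of_deriv_le
    (fun s hs => (hGE s hs).continuousAt.continuousWithinAt)
    (fun s hs => (hGE s (interior_subset hs)).differentiableAt.differentiableWithinAt)
    hderiv_le a (left_mem_Icc.2 ht.1) t (right_mem_Icc.2 ht.1) ht.1

theorem Filter.neBot_inf_comap_atTop {α : Type*} {l : Filter α} {f : α → ℝ}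
    (h : ∀ M, ∃ᶠ x in l, M ≤ f x) : (l ⊓ comap f atTop).NeBot := by
  refine inf_neBot_iff_frequently_right.2 fun {p} hp => ?_
  obtain ⟨s, hs, hsp⟩ := mem_comap.1 hp
  obtain ⟨M, hM⟩ := mem_atTop_sets.1 hs
  exact (h M).mono fun x hx => hsp (hM _ hx)

theorem Real.rpow_three_halves {x : ℝ} (hx : 0 ≤ x) : x ^ ((3 : ℝ) / 2) = x * √x := by
  rw [rpow_div_two_eq_sqrt _ hx, show (3 : ℝ) = (3 : ℕ) by norm_num, rpow_natCast,
    ← sq_sqrt hx, sqrt_sq (sqrt_nonneg x)]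
  ring

theorem Real.rpow_neg_one_half {x : ℝ} (hx : 0 ≤ x) : x ^ (-(1 : ℝ) / 2) = 1 / √x := by
  rw [rpow_div_two_eq_sqrt _ hx, rpow_neg_one, one_div]

theorem Real.tendsto_const_div_sqrt_atTop_zero (c : ℝ) : Tendsto (fun x => c / √x) atTop (𝓝 0) :=
  tendsto_const_nhds.div_atTop tendsto_sqrt_atTop

noncomputable def blowupPotential (A B x : ℝ) : ℝ :=
  2 * B / A ^ 2 * log (A / √x + B) - 2 / (A * √x)

theorem hasDerivAt_blowupPotential {A B x : ℝ} (hA : 0 < A) (hB : 0 < B) (hx : 0 < x) :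
    HasDerivAt (blowupPotential A B) (A * x ^ ((3 : ℝ) / 2) + B * x ^ 2)⁻¹ x := by
  have hs : 0 < √x := sqrt_pos.2 hx
  have hinv := (hasDerivAt_sqrt hx.ne').fun_inv hs.ne'
  have hlog := ((hinv.const_mul A).add_const B).log (by positivity)
  have hΦ := (hlog.const_mul (2 * B / A ^ 2)).sub (hinv.const_mul (2 / A))
  have hfun : blowupPotential A B =
      fun y => 2 * B / A ^ 2 * log (A * (√y)⁻¹ + B) - 2 / A * (√y)⁻¹ := by
    funext y; simp only [blowupPotential, div_eq_mul_inv]; ring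
  rw [hfun, rpow_three_halves hx.le]
  refine hΦ.congr_deriv ?_
  obtain ⟨s, hs0, rfl⟩ : ∃ s, 0 < s ∧ x = s ^ 2 := ⟨√x, hs, (sq_sqrt hx.le).symm⟩
  rw [sqrt_sq hs0.le]
  field_simp
  ring

theorem tendsto_blowupPotential_atTop {A B : ℝ} (hB : B ≠ 0) :
    Tendsto (blowupPotential A B) atTop (𝓝 (2 * B / A ^ 2 * log B)) := by
  have hlog := (((tendsto_const_div_sqrt_atTop_zero A).add_const B).log (by simpa using hB)).const_mul
    (2 * B / A ^ 2)
  have := hlog.sub (tendsto_const_div_sqrt_atTop_zero (2 / A))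
  simp only [zero_add, sub_zero] at this
  refine this.congr fun x => ?_
  simp only [blowupPotential]
  ring

theorem blowupPotential_eq {A B x : ℝ} (hA : 0 < A) (hB : 0 < B) (hx : 0 < x) :
    blowupPotential A B x = 2 * B / A ^ 2 * log B -
      ((2 / A) * (1 / √x) + (B / A ^ 2) * log (x * B ^ 2 / (A + B * √x) ^ 2)) := by
  obtain ⟨s, hs, rfl⟩ : ∃ s, 0 < s ∧ x = s ^ 2 := ⟨√x, sqrt_pos.2 hx, (sq_sqrt hx.le).symm⟩
  have hsq : s ^ 2 * B ^ 2 / (A + B * s) ^ 2 = (B / (A / s + B)) ^ 2 := by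
    field_simp
  rw [blowupPotential, sqrt_sq hs.le, hsq, log_pow, log_div hB.ne' (by positivity)]
  push_cast
  ring

theorem tendsto_log_mul_sq_add_mul_sqrt_div {A B c d : ℝ} (hB : B ≠ 0) (hc : c ≠ 0)
    (hd : d ≠ 0) : Tendsto (fun x => log (c * (A + B * √x) ^ 2 / (x * d))) atTop
      (𝓝 (log (c * B ^ 2 / d))) := by
  have hlim := ((((tendsto_const_div_sqrt_atTop_zero A).add_const B).pow 2).const_mul c).div_const d
  rw [zero_add] at hlim
  refine (hlim.log (by positivity)).congr' ?_
  filter_upwards [eventually_gt_atTop 0] with x hx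
  have hs : 0 < √x := sqrt_pos.2 hx
  congr 1
  field_simp
  rw [sq_sqrt hx.le, mul_comm]

theorem blowup_time_lower_bound (t₁ T A B : ℝ) (ht : t₁ < T) (hA : 0 < A) (hB : 0 < B)
    (E E' : ℝ → ℝ)
    (hderiv : ∀ t ∈ Set.Ico t₁ T, HasDerivAt E (E' t) t)
    (hE0 : 0 < E t₁)
    (hmono : ∀ t ∈ Set.Ico t₁ T, E t₁ ≤ E t)
    (hODI : ∀ t ∈ Set.Ioo t₁ T, E' t ≤ A * E t ^ ((3 : ℝ) / 2) + B * E t ^ 2)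
    (hblow : ∀ M : ℝ, ∃ᶠ t in nhdsWithin T (Set.Iio T), M ≤ E t) :
    (∀ L : ℝ,
      Tendsto (fun t => Real.log (E t₁ * (A + B * Real.sqrt (E t)) ^ 2 /
          (E t * (A + B * Real.sqrt (E t₁)) ^ 2))) (nhdsWithin T (Set.Iio T)) (nhds L) →
      (2 / A) * (1 / Real.sqrt (E t₁)) + (B / A ^ 2) * L ≤ T - t₁) ∧
    (2 / A) * (E t₁) ^ (-(1 : ℝ) / 2) +
      (B / A ^ 2) * Real.log (E t₁ * B ^ 2 / (A + B * Real.sqrt (E t₁)) ^ 2) ≤ T - t₁ := by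
  have hEpos : ∀ t ∈ Ico t₁ T, 0 < E t := fun t h => hE0.trans_le (hmono t h)
  have hgrowth : ∀ t ∈ Ico t₁ T,
      blowupPotential A B (E t) - blowupPotential A B (E t₁) ≤ t - t₁ :=
    fun t => image_sub_le_sub_of_hasDerivAt_inv
      (g := fun x => A * x ^ ((3 : ℝ) / 2) + B * x ^ 2) hderiv
      (fun s hs => hasDerivAt_blowupPotential hA hB (hEpos s hs))
      (fun s hs => by have := hEpos s (Ioo_subset_Ico_self hs); positivity) hODI
  let l := 𝓝[<] T ⊓ comap E atTop
  have : l.NeBot := neBot_inf_comap_atTop hblow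
  have hE : Tendsto E l atTop := tendsto_comap.mono_left inf_le_right
  have hT : Tendsto id l (𝓝 T) := tendsto_id.mono_left (inf_le_left.trans nhdsWithin_le_nhds)
  have hIco : ∀ᶠ t in l, t ∈ Ico t₁ T := mem_inf_of_left (Ico_mem_nhdsLT ht)
  have hbound : 2 * B / A ^ 2 * log B - blowupPotential A B (E t₁) ≤ T - t₁ :=
    le_of_tendsto_of_tendsto (((tendsto_blowupPotential_atTop hB.ne').comp hE).sub_const _)
      (hT.sub_const t₁) (hIco.mono hgrowth)
  rw [blowupPotential_eq hA hB hE0, sub_sub_cancel] at hbound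
  refine ⟨fun L hL => ?_, by rwa [rpow_neg_one_half hE0.le]⟩
  rwa [tendsto_nhds_unique (hL.mono_left inf_le_left)
    ((tendsto_log_mul_sq_add_mul_sqrt_div hB.ne' hE0.ne' (by positivity)).comp hE)]
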